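/- Kang–Lee Composition–Diamond lemma: Let (S, T) be a pair of sets of monic polynomials in k⟨X⟩ with a monomial well order < on X*, let A = k⟨X⟩/Id(S), and let M = A / A(T + Id(S)) be the left A-module defined by (S, T). Suppose (S, T) is a Gröbner–Shirshov pair for the A-module M, and let p be a nonzero element of k⟨X⟩T + Id(S). Then either p̄ = a·s̄·b for some a, b ∈ X* and s ∈ S, or p̄ = c·t̄ for some c ∈ X* and t ∈ T. -/

import Mathlib

/-! Kang–Lee's Composition–Diamond lemma: if `(S, T)` is a Gröbner–Shirshov pair
for the `A`-module `A/A(T + Id(S))`, `A = k⟨X⟩/Id(S)`, and `p ∈ k⟨X⟩T + Id(S)` is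
nonzero, then `p̄ = a·s̄·b` for some `s ∈ S` or `p̄ = c·t̄` for some `t ∈ T`. -/

open MonoidAlgebra

/-- The free associative algebra `k⟨X⟩`, with `k`-basis the free monoid `X*`. -/
abbrev FreeAssocAlg (k X : Type*) [Field k] : Type _ := MonoidAlgebra k (FreeMonoid X)

variable {k X : Type*} [Field k]

/-- `w` is the leading word of `f ∈ k⟨X⟩`. -/
def LeadWord (lt : FreeMonoid X → FreeMonoid X → Prop) (f : FreeAssocAlg k X)
    (w : FreeMonoid X) : Prop :=
  f.coeff w ≠ 0 ∧ ∀ u : FreeMonoid X, f.coeff u ≠ 0 → u ≠ w → lt u w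

/-- `f ∈ k⟨X⟩` is monic. -/
def IsMonicPoly (lt : FreeMonoid X → FreeMonoid X → Prop) (f : FreeAssocAlg k X) : Prop :=
  ∃ w : FreeMonoid X, LeadWord lt f w ∧ f.coeff w = 1

/-- `h ≡ 0 mod (S, w)`: `h = ∑ αᵢ aᵢ sᵢ bᵢ` with `sᵢ ∈ S` and `aᵢ·s̄ᵢ·bᵢ < w`. -/
def TrivialModAlg (lt : FreeMonoid X → FreeMonoid X → Prop) (S : Set (FreeAssocAlg k X))
    (h : FreeAssocAlg k X) (w : FreeMonoid X) : Prop :=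
  ∃ (n : ℕ) (α : Fin n → k) (a b : Fin n → FreeMonoid X) (s : Fin n → FreeAssocAlg k X)
    (ws : Fin n → FreeMonoid X),
      (∀ i, s i ∈ S) ∧ (∀ i, LeadWord lt (s i) (ws i)) ∧
      h = ∑ i, MonoidAlgebra.single (a i) (α i) * s i * MonoidAlgebra.single (b i) (1 : k) ∧
      ∀ i, lt (a i * ws i * b i) w

/-- `S` is closed under composition (a Gröbner–Shirshov basis in `k⟨X⟩`). -/
def IsGSBasisAlg (lt : FreeMonoid X → FreeMonoid X → Prop)
    (S : Set (FreeAssocAlg k X)) : Prop :=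
  (∀ f ∈ S, ∀ g ∈ S, ∀ wf wg a b : FreeMonoid X,
    LeadWord lt f wf → LeadWord lt g wg → wf * a = b * wg → b.length < wf.length →
    TrivialModAlg lt S
      (f * MonoidAlgebra.single a (1 : k) - MonoidAlgebra.single b (1 : k) * g) (wf * a)) ∧
  (∀ f ∈ S, ∀ g ∈ S, ∀ wf wg a b : FreeMonoid X,
    LeadWord lt f wf → LeadWord lt g wg → a * wf * b = wg →
    TrivialModAlg lt S
      (MonoidAlgebra.single a (1 : k) * f * MonoidAlgebra.single b (1 : k) - g) wg)

/-- `h ≡ 0 mod (S, T; w)`. -/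
def TrivialModPair (lt : FreeMonoid X → FreeMonoid X → Prop)
    (S T : Set (FreeAssocAlg k X)) (h : FreeAssocAlg k X) (w : FreeMonoid X) : Prop :=
  ∃ (n m : ℕ) (α : Fin n → k) (a b : Fin n → FreeMonoid X) (s : Fin n → FreeAssocAlg k X)
    (ws : Fin n → FreeMonoid X) (β : Fin m → k) (c : Fin m → FreeMonoid X)
    (t : Fin m → FreeAssocAlg k X) (wt : Fin m → FreeMonoid X),
      (∀ i, s i ∈ S) ∧ (∀ i, LeadWord lt (s i) (ws i)) ∧
      (∀ j, t j ∈ T) ∧ (∀ j, LeadWord lt (t j) (wt j)) ∧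
      h = (∑ i, MonoidAlgebra.single (a i) (α i) * s i * MonoidAlgebra.single (b i) (1 : k))
            + ∑ j, MonoidAlgebra.single (c j) (β j) * t j ∧
      (∀ i, lt (a i * ws i * b i) w) ∧ (∀ j, lt (c j * wt j) w)

/-- `(S, T)` is a Gröbner–Shirshov pair. -/
def IsGSPair (lt : FreeMonoid X → FreeMonoid X → Prop)
    (S T : Set (FreeAssocAlg k X)) : Prop :=
  IsGSBasisAlg lt S ∧
  (∀ f ∈ T, ∀ g ∈ T, ∀ wf wg a : FreeMonoid X,
    LeadWord lt f wf → LeadWord lt g wg → wf = a * wg →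
    TrivialModPair lt S T (f - MonoidAlgebra.single a (1 : k) * g) wf) ∧
  (∀ f ∈ S, ∀ g ∈ T, ∀ wf wg a b c : FreeMonoid X,
    LeadWord lt f wf → LeadWord lt g wg → a * wf * b = c * wg → c.length < wf.length →
    TrivialModPair lt S T
      (MonoidAlgebra.single a (1 : k) * f * MonoidAlgebra.single b (1 : k)
        - MonoidAlgebra.single c (1 : k) * g) (a * wf * b))


namespace CD

instance : CoeFun (FreeAssocAlg k X) (fun _ => FreeMonoid X → k) := ⟨fun f => f.coeff⟩

/-- Splitting lemma for equal products in a free monoid. -/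
lemma fm_split {a b c d : FreeMonoid X} (h : a * b = c * d) :
    (∃ m, c = a * m ∧ b = m * d) ∨ (∃ m, a = c * m ∧ d = m * b) := by
  have h' : FreeMonoid.toList a ++ FreeMonoid.toList b
      = FreeMonoid.toList c ++ FreeMonoid.toList d := congrArg FreeMonoid.toList h
  rcases List.append_eq_append_iff.1 h' with ⟨m, hm1, hm2⟩ | ⟨m, hm1, hm2⟩
  · refine Or.inl ⟨FreeMonoid.ofList m, FreeMonoid.toList.injective ?_, FreeMonoid.toList.injective ?_⟩
    · simpa using hm1
    · simpa using hm2
  · refine Or.inr ⟨FreeMonoid.ofList m, FreeMonoid.toList.injective ?_, FreeMonoid.toList.injective ?_⟩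
    · simpa using hm1
    · simpa using hm2

lemma fm_len_lt {c m w : FreeMonoid X} (h : w = c * m) (hm : m ≠ 1) :
    c.length < w.length := by
  subst h
  rw [FreeMonoid.length_mul]
  have : m.length ≠ 0 := fun h0 => hm (FreeMonoid.length_eq_zero.1 h0)
  omega

lemma conj_inj (a b : FreeMonoid X) :
    Function.Injective (fun u : FreeMonoid X => a * u * b) := by
  intro u v huv
  simp only [] at huv
  have h1 : a * u = a * v := mul_right_cancel huv
  exact mul_left_cancel h1

lemma conj_eq_mapDomain (a b : FreeMonoid X) (f : FreeAssocAlg k X) :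
    MonoidAlgebra.single a (1:k) * f * MonoidAlgebra.single b 1
      = MonoidAlgebra.mapDomain (fun u => a * u * b) f := by
  induction f using MonoidAlgebra.induction_linear with
  | zero => simp
  | add f g hf hg =>
      rw [mul_add, add_mul, hf, hg, MonoidAlgebra.mapDomain_add]
  | single u c =>
      rw [MonoidAlgebra.single_mul_single, MonoidAlgebra.single_mul_single, one_mul, mul_one,
        MonoidAlgebra.mapDomain_single]

lemma conj_apply (a b u : FreeMonoid X) (f : FreeAssocAlg k X) :
    (MonoidAlgebra.single a (1:k) * f * MonoidAlgebra.single b 1 : FreeAssocAlg k X) (a * u * b) = f u := by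
  rw [conj_eq_mapDomain]
  exact Finsupp.mapDomain_apply (conj_inj a b) f.coeff u

lemma conj_support {a b v : FreeMonoid X} {f : FreeAssocAlg k X}
    (h : (MonoidAlgebra.single a (1:k) * f * MonoidAlgebra.single b 1 : FreeAssocAlg k X) v ≠ 0) :
    ∃ u, f u ≠ 0 ∧ v = a * u * b := by
  classical
  rw [conj_eq_mapDomain] at h
  have hv : v ∈ (Finsupp.mapDomain (fun u => a * u * b) f.coeff).support :=
    Finsupp.mem_support_iff.2 h
  have := Finsupp.mapDomain_support hv
  rcases Finset.mem_image.1 this with ⟨u, hu, rfl⟩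
  exact ⟨u, Finsupp.mem_support_iff.1 hu, rfl⟩

section Order
variable {lt : FreeMonoid X → FreeMonoid X → Prop} (hwo : IsWellOrder (FreeMonoid X) lt)
include hwo

lemma lt_irrefl' (u : FreeMonoid X) : ¬ lt u u := by
  haveI := hwo
  exact _root_.irrefl u

lemma lt_trans' {u v w : FreeMonoid X} (h1 : lt u v) (h2 : lt v w) : lt u w := by
  haveI := hwo
  exact _root_.trans h1 h2

lemma lt_tricho {u v : FreeMonoid X} : lt u v ∨ u = v ∨ lt v u := by
  haveI := hwo
  exact trichotomous u v

lemma leadword_unique {f : FreeAssocAlg k X} {w w' : FreeMonoid X}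
    (h : LeadWord lt f w) (h' : LeadWord lt f w') : w = w' := by
  by_contra hne
  have h1 := h'.2 w h.1 (fun he => hne he)
  have h2 := h.2 w' h'.1 (fun he => hne he.symm)
  exact lt_irrefl' hwo w (lt_trans' hwo h1 h2)

lemma finset_max {s : Finset (FreeMonoid X)} (hs : s.Nonempty) :
    ∃ m ∈ s, ∀ x ∈ s, x = m ∨ lt x m := by
  classical
  induction s using Finset.induction_on with
  | empty => exact absurd hs (by simp)
  | @insert a s ha ih =>
      rcases s.eq_empty_or_nonempty with rfl | hs'
      · exact ⟨a, by simp, by simp⟩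
      · obtain ⟨m, hm, hmax⟩ := ih hs'
        rcases lt_tricho hwo (u := a) (v := m) with h | h | h
        · exact ⟨m, Finset.mem_insert_of_mem hm, by
            intro x hx
            rcases Finset.mem_insert.1 hx with rfl | hx
            · exact Or.inr h
            · exact hmax x hx⟩
        · exact ⟨m, Finset.mem_insert_of_mem hm, by
            intro x hx
            rcases Finset.mem_insert.1 hx with rfl | hx
            · exact Or.inl h
            · exact hmax x hx⟩
        · refine ⟨a, Finset.mem_insert_self a s, ?_⟩
          intro x hx
          rcases Finset.mem_insert.1 hx with rfl | hx
          · exact Or.inl rfl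
          · rcases hmax x hx with rfl | hx'
            · exact Or.inr h
            · exact Or.inr (lt_trans' hwo hx' h)

lemma leadword_exists {f : FreeAssocAlg k X} (hf : f ≠ 0) :
    ∃ w, LeadWord lt f w := by
  obtain ⟨m, hm, hmax⟩ := finset_max hwo (Finsupp.support_nonempty_iff.2 (fun h => hf (MonoidAlgebra.coeff_eq_zero.1 h)))
  refine ⟨m, Finsupp.mem_support_iff.1 hm, fun u hu hne => ?_⟩
  rcases hmax u (Finsupp.mem_support_iff.2 hu) with rfl | h
  · exact absurd rfl hne
  · exact h

end Order

lemma leadword_conj {lt : FreeMonoid X → FreeMonoid X → Prop}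
    (hmono : ∀ u v a b : FreeMonoid X, lt u v → lt (a * u * b) (a * v * b))
    {f : FreeAssocAlg k X} {wf : FreeMonoid X} (h : LeadWord lt f wf) (a b : FreeMonoid X) :
    LeadWord lt (MonoidAlgebra.single a (1:k) * f * MonoidAlgebra.single b 1) (a * wf * b) := by
  constructor
  · rw [conj_apply]; exact h.1
  · intro u hu hne
    obtain ⟨v, hv, rfl⟩ := conj_support hu
    have hvne : v ≠ wf := fun he => hne (by rw [he])
    exact hmono v wf a b (h.2 v hv hvne)

section Spans

variable (lt : FreeMonoid X → FreeMonoid X → Prop) (S T : Set (FreeAssocAlg k X))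

/-- `x` is a monomial multiple `a·s·b` of some `s ∈ S` with value `v = a·s̄·b`. -/
def GValS (x : FreeAssocAlg k X) (v : FreeMonoid X) : Prop :=
  ∃ a b s ws, s ∈ S ∧ LeadWord lt s ws ∧ a * ws * b = v ∧
    x = MonoidAlgebra.single a (1:k) * s * MonoidAlgebra.single b 1

/-- `x` is a monomial multiple `c·t` of some `t ∈ T` with value `v = c·t̄`. -/
def GValT (x : FreeAssocAlg k X) (v : FreeMonoid X) : Prop :=
  ∃ c t wt, t ∈ T ∧ LeadWord lt t wt ∧ c * wt = v ∧
    x = MonoidAlgebra.single c (1:k) * t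

def GVal (x : FreeAssocAlg k X) (v : FreeMonoid X) : Prop :=
  GValS lt S x v ∨ GValT lt T x v

noncomputable def MLTS (w : FreeMonoid X) : Submodule k (FreeAssocAlg k X) :=
  Submodule.span k {x | ∃ v, GValS lt S x v ∧ lt v w}

noncomputable def MLT (w : FreeMonoid X) : Submodule k (FreeAssocAlg k X) :=
  Submodule.span k {x | ∃ v, GVal lt S T x v ∧ lt v w}

noncomputable def MLE (w : FreeMonoid X) : Submodule k (FreeAssocAlg k X) :=
  Submodule.span k {x | ∃ v, GVal lt S T x v ∧ (v = w ∨ lt v w)}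

noncomputable def SuppP (P : FreeMonoid X → Prop) : Submodule k (FreeAssocAlg k X) where
  carrier := {f | ∀ u, f u ≠ 0 → P u}
  zero_mem' := fun u hu => absurd rfl hu
  add_mem' := by
    intro f g hf hg u hu
    by_cases h1 : f u = 0
    · by_cases h2 : g u = 0
      · exact absurd (by rw [MonoidAlgebra.coeff_add, Finsupp.add_apply, h1, h2, add_zero]) hu
      · exact hg u h2
    · exact hf u h1
  smul_mem' := by
    intro c f hf u hu
    apply hf u
    intro h0
    exact hu (by rw [MonoidAlgebra.coeff_smul, Finsupp.smul_apply, h0, smul_zero])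

end Spans

section SpanLemmas

variable {lt : FreeMonoid X → FreeMonoid X → Prop} {S T : Set (FreeAssocAlg k X)}

lemma mltS_le_mlt (w : FreeMonoid X) : MLTS lt S w ≤ MLT lt S T w :=
  Submodule.span_mono (fun x ⟨v, hv, hlt⟩ => ⟨v, Or.inl hv, hlt⟩)

lemma conj1_eq (c : FreeMonoid X) (f : FreeAssocAlg k X) :
    MonoidAlgebra.single c (1:k) * f
      = MonoidAlgebra.single c (1:k) * f * MonoidAlgebra.single (1 : FreeMonoid X) 1 := by
  rw [← MonoidAlgebra.one_def, mul_one]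

lemma conj1_apply (c u : FreeMonoid X) (f : FreeAssocAlg k X) :
    (MonoidAlgebra.single c (1:k) * f : FreeAssocAlg k X) (c * u) = f u := by
  rw [conj1_eq]
  have := conj_apply (k := k) c 1 u f
  rwa [mul_one] at this

lemma conj1_support {c v : FreeMonoid X} {f : FreeAssocAlg k X}
    (h : (MonoidAlgebra.single c (1:k) * f : FreeAssocAlg k X) v ≠ 0) :
    ∃ u, f u ≠ 0 ∧ v = c * u := by
  rw [conj1_eq] at h
  obtain ⟨u, hu, rfl⟩ := conj_support h
  exact ⟨u, hu, by rw [mul_one]⟩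

variable (hwo : IsWellOrder (FreeMonoid X) lt)
variable (hmono : ∀ u v a b : FreeMonoid X, lt u v → lt (a * u * b) (a * v * b))

include hmono in
lemma hmono_left (a u v : FreeMonoid X) (h : lt u v) : lt (a * u) (a * v) := by
  have := hmono u v a 1 h
  rwa [mul_one, mul_one] at this

include hmono in
lemma hmono_right (b u v : FreeMonoid X) (h : lt u v) : lt (u * b) (v * b) := by
  have := hmono u v 1 b h
  rwa [one_mul, one_mul] at this

include hwo hmono in
lemma gval_supp {x : FreeAssocAlg k X} {v : FreeMonoid X} (hx : GVal lt S T x v) :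
    ∀ u, x u ≠ 0 → u = v ∨ lt u v := by
  intro u hu
  rcases hx with ⟨a, b, s, ws, _, hws, hv, rfl⟩ | ⟨c, t, wt, _, hwt, hv, rfl⟩
  · obtain ⟨y, hy, rfl⟩ := conj_support hu
    by_cases hyw : y = ws
    · subst hyw; exact Or.inl hv
    · exact Or.inr (hv ▸ hmono y ws a b (hws.2 y hy hyw))
  · obtain ⟨y, hy, rfl⟩ := conj1_support hu
    by_cases hyw : y = wt
    · subst hyw; exact Or.inl hv
    · exact Or.inr (hv ▸ hmono_left hmono c y wt (hwt.2 y hy hyw))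

include hwo hmono in
lemma mlt_le_supp (w : FreeMonoid X) :
    MLT lt S T w ≤ SuppP (fun u => lt u w) := by
  apply Submodule.span_le.2
  rintro x ⟨v, hv, hlt⟩ u hu
  rcases gval_supp hwo hmono hv u hu with rfl | h
  · exact hlt
  · exact lt_trans' hwo h hlt

include hwo hmono in
lemma mle_le_supp (w : FreeMonoid X) :
    MLE lt S T w ≤ SuppP (fun u => u = w ∨ lt u w) := by
  apply Submodule.span_le.2
  rintro x ⟨v, hv, hvw⟩ u hu
  rcases gval_supp hwo hmono hv u hu with rfl | h
  · exact hvw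
  · rcases hvw with rfl | hvw
    · exact Or.inr h
    · exact Or.inr (lt_trans' hwo h hvw)

include hwo in
lemma gval_apply_one (hSm : ∀ s ∈ S, IsMonicPoly lt s) (hTm : ∀ t ∈ T, IsMonicPoly lt t)
    {x : FreeAssocAlg k X} {v : FreeMonoid X} (hx : GVal lt S T x v) : x v = 1 := by
  rcases hx with ⟨a, b, s, ws, hs, hws, hv, rfl⟩ | ⟨c, t, wt, ht, hwt, hv, rfl⟩
  · obtain ⟨w', hw', hone⟩ := hSm s hs
    have : ws = w' := leadword_unique hwo hws hw'
    subst this hv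
    rw [conj_apply]; exact hone
  · obtain ⟨w', hw', hone⟩ := hTm t ht
    have : wt = w' := leadword_unique hwo hwt hw'
    subst this hv
    rw [conj1_apply]; exact hone

/-- Expansion lemma: `f * s * g` is in the S-span when all monomial values are `< w`. -/
lemma mul_s_mul_mem {s : FreeAssocAlg k X} {ws : FreeMonoid X} (hs : s ∈ S)
    (hws : LeadWord lt s ws) (f g : FreeAssocAlg k X) {w : FreeMonoid X}
    (hb : ∀ u, f u ≠ 0 → ∀ v, g v ≠ 0 → lt (u * ws * v) w) :
    f * s * g ∈ MLTS lt S w := by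
  classical
  have hf : f = ∑ u ∈ f.coeff.support, MonoidAlgebra.single u (f u) := by
    conv_lhs => rw [← MonoidAlgebra.sum_coeff_single f]
    rfl
  have hg : g = ∑ v ∈ g.coeff.support, MonoidAlgebra.single v (g v) := by
    conv_lhs => rw [← MonoidAlgebra.sum_coeff_single g]
    rfl
  rw [hf, hg, Finset.sum_mul, Finset.sum_mul]
  apply Submodule.sum_mem
  intro u hu
  rw [Finset.mul_sum]
  apply Submodule.sum_mem
  intro v hv
  have heq : MonoidAlgebra.single u (f u) * s * MonoidAlgebra.single v (g v)
      = (f u * g v) • (MonoidAlgebra.single u (1:k) * s * MonoidAlgebra.single v 1) := by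
    rw [show MonoidAlgebra.single u (f u) = (f u) • MonoidAlgebra.single u (1:k) by
        rw [MonoidAlgebra.smul_single', mul_one],
      show MonoidAlgebra.single v (g v) = (g v) • MonoidAlgebra.single v (1:k) by
        rw [MonoidAlgebra.smul_single', mul_one]]
    rw [smul_mul_assoc, smul_mul_assoc, mul_smul_comm, smul_smul]
  rw [heq]
  apply Submodule.smul_mem
  apply Submodule.subset_span
  exact ⟨u * ws * v, ⟨u, v, s, ws, hs, hws, rfl, rfl⟩,
    hb u (Finsupp.mem_support_iff.1 hu) v (Finsupp.mem_support_iff.1 hv)⟩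

/-- Expansion lemma for the module part: `f * t` lies in `MLT w`. -/
lemma mul_t_mem {t : FreeAssocAlg k X} {wt : FreeMonoid X} (ht : t ∈ T)
    (hwt : LeadWord lt t wt) (f : FreeAssocAlg k X) {w : FreeMonoid X}
    (hb : ∀ u, f u ≠ 0 → lt (u * wt) w) :
    f * t ∈ MLT lt S T w := by
  classical
  have hf : f = ∑ u ∈ f.coeff.support, MonoidAlgebra.single u (f u) := by
    conv_lhs => rw [← MonoidAlgebra.sum_coeff_single f]
    rfl
  rw [hf, Finset.sum_mul]
  apply Submodule.sum_mem
  intro u hu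
  have heq : MonoidAlgebra.single u (f u) * t
      = (f u) • (MonoidAlgebra.single u (1:k) * t) := by
    rw [show MonoidAlgebra.single u (f u) = (f u) • MonoidAlgebra.single u (1:k) by
        rw [MonoidAlgebra.smul_single', mul_one],
      smul_mul_assoc]
  rw [heq]
  apply Submodule.smul_mem
  apply Submodule.subset_span
  exact ⟨u * wt, Or.inr ⟨u, t, wt, ht, hwt, rfl, rfl⟩, hb u (Finsupp.mem_support_iff.1 hu)⟩

include hmono in
/-- Conjugation stability of the S-span. -/
lemma mltS_conj {x : FreeAssocAlg k X} {v : FreeMonoid X} (hx : x ∈ MLTS lt S v)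
    (a b : FreeMonoid X) :
    MonoidAlgebra.single a (1:k) * x * MonoidAlgebra.single b 1 ∈ MLTS lt S (a * v * b) := by
  induction hx using Submodule.span_induction with
  | mem y hy =>
      obtain ⟨v', ⟨a', b', s, ws, hs, hws, hv', rfl⟩, hlt⟩ := hy
      apply Submodule.subset_span
      refine ⟨a * v' * b, ⟨a * a', b' * b, s, ws, hs, hws, ?_, ?_⟩, hmono _ _ _ _ hlt⟩
      · rw [← hv']; simp [mul_assoc]
      · rw [← mul_assoc, ← mul_assoc, MonoidAlgebra.single_mul_single, one_mul,
          mul_assoc, mul_assoc, MonoidAlgebra.single_mul_single, one_mul, mul_assoc]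
  | zero => simpa using Submodule.zero_mem _
  | add y z _ _ hy hz =>
      have : MonoidAlgebra.single a (1:k) * (y + z) * MonoidAlgebra.single b 1
          = MonoidAlgebra.single a (1:k) * y * MonoidAlgebra.single b 1
            + MonoidAlgebra.single a (1:k) * z * MonoidAlgebra.single b 1 := by
        rw [mul_add, add_mul]
      rw [this]; exact Submodule.add_mem _ hy hz
  | smul c y _ hy =>
      have : MonoidAlgebra.single a (1:k) * (c • y) * MonoidAlgebra.single b 1
          = c • (MonoidAlgebra.single a (1:k) * y * MonoidAlgebra.single b 1) := by
        rw [mul_smul_comm, smul_mul_assoc]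
      rw [this]; exact Submodule.smul_mem _ _ hy

include hmono in
/-- Left multiplication stability of `MLT`. -/
lemma mlt_lmul {x : FreeAssocAlg k X} {v : FreeMonoid X} (hx : x ∈ MLT lt S T v)
    (c : FreeMonoid X) :
    MonoidAlgebra.single c (1:k) * x ∈ MLT lt S T (c * v) := by
  induction hx using Submodule.span_induction with
  | mem y hy =>
      obtain ⟨v', hv', hlt⟩ := hy
      apply Submodule.subset_span
      rcases hv' with ⟨a', b', s, ws, hs, hws, hv', rfl⟩ | ⟨c', t, wt, ht, hwt, hv', rfl⟩
      · refine ⟨c * v', Or.inl ⟨c * a', b', s, ws, hs, hws, ?_, ?_⟩, hmono_left hmono c _ _ hlt⟩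
        · rw [← hv']; simp [mul_assoc]
        · rw [← mul_assoc, ← mul_assoc, MonoidAlgebra.single_mul_single, one_mul]
      · refine ⟨c * v', Or.inr ⟨c * c', t, wt, ht, hwt, ?_, ?_⟩, hmono_left hmono c _ _ hlt⟩
        · rw [← hv', mul_assoc]
        · rw [← mul_assoc, MonoidAlgebra.single_mul_single, one_mul]
  | zero => simpa using Submodule.zero_mem _
  | add y z _ _ hy hz =>
      rw [mul_add]; exact Submodule.add_mem _ hy hz
  | smul d y _ hy =>
      rw [mul_smul_comm]; exact Submodule.smul_mem _ _ hy

/-- Converter: `TrivialModAlg` gives membership in the S-span. -/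
lemma trivAlg_mem {h : FreeAssocAlg k X} {w : FreeMonoid X}
    (H : TrivialModAlg lt S h w) : h ∈ MLTS lt S w := by
  obtain ⟨n, α, a, b, s, ws, hS, hL, rfl, hlt⟩ := H
  apply Submodule.sum_mem
  intro i _
  have heq : MonoidAlgebra.single (a i) (α i) * s i * MonoidAlgebra.single (b i) (1:k)
      = (α i) • (MonoidAlgebra.single (a i) (1:k) * s i * MonoidAlgebra.single (b i) 1) := by
    rw [show MonoidAlgebra.single (a i) (α i) = (α i) • MonoidAlgebra.single (a i) (1:k) by
        rw [MonoidAlgebra.smul_single', mul_one], smul_mul_assoc, smul_mul_assoc]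
  rw [heq]
  exact Submodule.smul_mem _ _ (Submodule.subset_span
    ⟨a i * ws i * b i, ⟨a i, b i, s i, ws i, hS i, hL i, rfl, rfl⟩, hlt i⟩)

/-- Converter: `TrivialModPair` gives membership in `MLT`. -/
lemma trivPair_mem {h : FreeAssocAlg k X} {w : FreeMonoid X}
    (H : TrivialModPair lt S T h w) : h ∈ MLT lt S T w := by
  obtain ⟨n, m, α, a, b, s, ws, β, c, t, wt, hS, hLs, hT, hLt, rfl, hlts, hltt⟩ := H
  apply Submodule.add_mem
  · apply Submodule.sum_mem
    intro i _
    have heq : MonoidAlgebra.single (a i) (α i) * s i * MonoidAlgebra.single (b i) (1:k)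
        = (α i) • (MonoidAlgebra.single (a i) (1:k) * s i * MonoidAlgebra.single (b i) 1) := by
      rw [show MonoidAlgebra.single (a i) (α i) = (α i) • MonoidAlgebra.single (a i) (1:k) by
          rw [MonoidAlgebra.smul_single', mul_one], smul_mul_assoc, smul_mul_assoc]
    rw [heq]
    exact Submodule.smul_mem _ _ (Submodule.subset_span
      ⟨a i * ws i * b i, Or.inl ⟨a i, b i, s i, ws i, hS i, hLs i, rfl, rfl⟩, hlts i⟩)
  · apply Submodule.sum_mem
    intro j _
    have heq : MonoidAlgebra.single (c j) (β j) * t j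
        = (β j) • (MonoidAlgebra.single (c j) (1:k) * t j) := by
      rw [show MonoidAlgebra.single (c j) (β j) = (β j) • MonoidAlgebra.single (c j) (1:k) by
          rw [MonoidAlgebra.smul_single', mul_one], smul_mul_assoc]
    rw [heq]
    exact Submodule.smul_mem _ _ (Submodule.subset_span
      ⟨c j * wt j, Or.inr ⟨c j, t j, wt j, hT j, hLt j, rfl, rfl⟩, hltt j⟩)

end SpanLemmas
section Claims

variable {lt : FreeMonoid X → FreeMonoid X → Prop} {S T : Set (FreeAssocAlg k X)}
variable (hwo : IsWellOrder (FreeMonoid X) lt)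
variable (hmono : ∀ u v a b : FreeMonoid X, lt u v → lt (a * u * b) (a * v * b))

lemma single_app (a b : FreeMonoid X) :
    MonoidAlgebra.single (a * b) (1:k) = MonoidAlgebra.single a 1 * MonoidAlgebra.single b 1 := by
  rw [MonoidAlgebra.single_mul_single, one_mul]

lemma single_supp {a u : FreeMonoid X} {c : k}
    (h : (MonoidAlgebra.single a c : FreeAssocAlg k X) u ≠ 0) : u = a := by
  by_contra hne
  exact h (Finsupp.single_eq_of_ne' (fun he => hne he.symm))

lemma sub_lead_supp {s : FreeAssocAlg k X} {ws : FreeMonoid X}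
    (hL : LeadWord lt s ws) (hone : s ws = 1) {x : FreeMonoid X}
    (hx : (s - MonoidAlgebra.single ws 1 : FreeAssocAlg k X) x ≠ 0) : lt x ws := by
  by_cases hxw : x = ws
  · subst hxw
    exact absurd (by rw [MonoidAlgebra.coeff_sub, Finsupp.sub_apply, hone, MonoidAlgebra.coeff_single, Finsupp.single_eq_same, sub_self]) hx
  · have : (s - MonoidAlgebra.single ws 1 : FreeAssocAlg k X) x = s x := by
      rw [MonoidAlgebra.coeff_sub, Finsupp.sub_apply, MonoidAlgebra.coeff_single, Finsupp.single_eq_of_ne' (fun he => hxw he.symm), sub_zero]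
    exact hL.2 x (this ▸ hx) hxw

include hwo in
lemma monic_coeff (hSm : ∀ s ∈ S, IsMonicPoly lt s) {s : FreeAssocAlg k X} {ws : FreeMonoid X}
    (hs : s ∈ S) (hL : LeadWord lt s ws) : s ws = 1 := by
  obtain ⟨w', hw', hone⟩ := hSm s hs
  rwa [leadword_unique hwo hL hw']

include hwo hmono in
lemma claimEE_disj {s₁ s₂ : FreeAssocAlg k X} {ws₁ ws₂ : FreeMonoid X}
    (hs₁ : s₁ ∈ S) (hL₁ : LeadWord lt s₁ ws₁) (hone₁ : s₁ ws₁ = 1)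
    (hs₂ : s₂ ∈ S) (hL₂ : LeadWord lt s₂ ws₂) (hone₂ : s₂ ws₂ = 1)
    (a d b₂ : FreeMonoid X) :
    MonoidAlgebra.single a (1:k) * s₁ * MonoidAlgebra.single (d * (ws₂ * b₂)) 1
      - MonoidAlgebra.single (a * (ws₁ * d)) (1:k) * s₂ * MonoidAlgebra.single b₂ 1
      ∈ MLTS lt S (a * (ws₁ * (d * (ws₂ * b₂)))) := by
  have key : MonoidAlgebra.single a (1:k) * s₁ * MonoidAlgebra.single (d * (ws₂ * b₂)) 1
      - MonoidAlgebra.single (a * (ws₁ * d)) (1:k) * s₂ * MonoidAlgebra.single b₂ 1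
      = (MonoidAlgebra.single a (1:k) * (s₁ - MonoidAlgebra.single ws₁ 1)
            * MonoidAlgebra.single d 1) * s₂ * MonoidAlgebra.single b₂ 1
        - MonoidAlgebra.single a (1:k) * s₁
            * (MonoidAlgebra.single d (1:k) * (s₂ - MonoidAlgebra.single ws₂ 1)
                * MonoidAlgebra.single b₂ 1) := by
    simp only [single_app]
    noncomm_ring
  rw [key]
  apply sub_mem
  · apply mul_s_mul_mem hs₂ hL₂
    intro u hu v hv
    obtain ⟨x, hx, rfl⟩ := conj_support hu
    have hxlt := sub_lead_supp hL₁ hone₁ hx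
    rw [single_supp hv]
    have h := hmono x ws₁ a (d * (ws₂ * b₂)) hxlt
    simp only [mul_assoc] at h ⊢
    exact h
  · apply mul_s_mul_mem hs₁ hL₁
    intro u hu v hv
    rw [single_supp hu]
    obtain ⟨y, hy, rfl⟩ := conj_support hv
    have hylt := sub_lead_supp hL₂ hone₂ hy
    have h := hmono y ws₂ (a * (ws₁ * d)) b₂ hylt
    simp only [mul_assoc] at h ⊢
    exact h

include hwo hmono in
lemma claimEE (hGS : IsGSBasisAlg lt S)
    {s₁ s₂ : FreeAssocAlg k X} {ws₁ ws₂ a₁ b₁ c b₂ w : FreeMonoid X}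
    (hs₁ : s₁ ∈ S) (hL₁ : LeadWord lt s₁ ws₁) (hone₁ : s₁ ws₁ = 1)
    (hs₂ : s₂ ∈ S) (hL₂ : LeadWord lt s₂ ws₂) (hone₂ : s₂ ws₂ = 1)
    (h₁ : a₁ * ws₁ * b₁ = w) (h₂ : a₁ * c * ws₂ * b₂ = w) :
    MonoidAlgebra.single a₁ (1:k) * s₁ * MonoidAlgebra.single b₁ 1
      - MonoidAlgebra.single (a₁ * c) (1:k) * s₂ * MonoidAlgebra.single b₂ 1
      ∈ MLTS lt S w := by
  have hcanc : ws₁ * b₁ = c * (ws₂ * b₂) := by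
    apply mul_left_cancel (a := a₁)
    have h₂' : a₁ * (c * (ws₂ * b₂)) = w := by rw [← h₂]; simp only [mul_assoc]
    have h₁' : a₁ * (ws₁ * b₁) = w := by rw [← h₁]; simp only [mul_assoc]
    rw [h₁', h₂']
  rcases fm_split hcanc with ⟨m, hm1, hm2⟩ | ⟨m, hm1, hm2⟩
  · -- disjoint: c = ws₁ * m, b₁ = m * (ws₂ * b₂)
    subst hm1 hm2
    have hw : a₁ * (ws₁ * (m * (ws₂ * b₂))) = w := by rw [← h₁]; simp only [mul_assoc]
    rw [← hw]
    exact claimEE_disj hwo hmono hs₁ hL₁ hone₁ hs₂ hL₂ hone₂ a₁ m b₂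
  · by_cases hm : m = 1
    · subst hm
      rw [mul_one] at hm1
      rw [one_mul] at hm2
      subst hm2
      subst hm1
      have hd := claimEE_disj hwo hmono hs₁ hL₁ hone₁ hs₂ hL₂ hone₂ a₁ 1 b₂
      simp only [one_mul, mul_one] at hd
      have hw : a₁ * (ws₁ * (ws₂ * b₂)) = w := by rw [← h₁]; simp only [mul_assoc]
      rw [hw] at hd
      exact hd
    · have hlen : c.length < ws₁.length := fm_len_lt hm1 hm
      rcases fm_split hm2 with ⟨e, he1, he2⟩ | ⟨e, he1, he2⟩
      · -- inclusion: m = ws₂ * e, b₂ = e * b₁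
        subst he1 he2
        have hincl : c * ws₂ * e = ws₁ := by rw [hm1, mul_assoc]
        have htriv := hGS.2 s₂ hs₂ s₁ hs₁ ws₂ ws₁ c e hL₂ hL₁ hincl
        have hmem := mltS_conj hmono (trivAlg_mem htriv) a₁ b₁
        rw [h₁] at hmem
        have key : MonoidAlgebra.single a₁ (1:k) * s₁ * MonoidAlgebra.single b₁ 1
            - MonoidAlgebra.single (a₁ * c) (1:k) * s₂ * MonoidAlgebra.single (e * b₁) 1
            = -(MonoidAlgebra.single a₁ (1:k)
                * (MonoidAlgebra.single c (1:k) * s₂ * MonoidAlgebra.single e 1 - s₁)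
                * MonoidAlgebra.single b₁ 1) := by
          simp only [single_app]
          noncomm_ring
        rw [key]
        exact neg_mem hmem
      · -- intersection: ws₂ = m * e, b₁ = e * b₂
        subst he1 he2
        have hint : ws₁ * e = c * (m * e) := by rw [hm1, mul_assoc]
        have htriv := hGS.1 s₁ hs₁ s₂ hs₂ ws₁ (m * e) e c hL₁ hL₂ hint hlen
        have hmem := mltS_conj hmono (trivAlg_mem htriv) a₁ b₂
        have hw : a₁ * (ws₁ * e) * b₂ = w := by rw [← h₁]; simp only [mul_assoc]
        rw [hw] at hmem
        have key : MonoidAlgebra.single a₁ (1:k) * s₁ * MonoidAlgebra.single (e * b₂) 1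
            - MonoidAlgebra.single (a₁ * c) (1:k) * s₂ * MonoidAlgebra.single b₂ 1
            = MonoidAlgebra.single a₁ (1:k)
                * (s₁ * MonoidAlgebra.single e 1 - MonoidAlgebra.single c (1:k) * s₂)
                * MonoidAlgebra.single b₂ 1 := by
          simp only [single_app]
          noncomm_ring
        rw [key]
        exact hmem

include hwo hmono in
lemma claimFF
    (hTT : ∀ f ∈ T, ∀ g ∈ T, ∀ wf wg a : FreeMonoid X,
      LeadWord lt f wf → LeadWord lt g wg → wf = a * wg →
      TrivialModPair lt S T (f - MonoidAlgebra.single a (1:k) * g) wf)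
    {t₁ t₂ : FreeAssocAlg k X} {wt₁ wt₂ c₁ m w : FreeMonoid X}
    (ht₁ : t₁ ∈ T) (hL₁ : LeadWord lt t₁ wt₁) (ht₂ : t₂ ∈ T) (hL₂ : LeadWord lt t₂ wt₂)
    (h₁ : c₁ * wt₁ = w) (hm : wt₁ = m * wt₂) :
    MonoidAlgebra.single c₁ (1:k) * t₁ - MonoidAlgebra.single (c₁ * m) (1:k) * t₂
      ∈ MLT lt S T w := by
  have htriv := hTT t₁ ht₁ t₂ ht₂ wt₁ wt₂ m hL₁ hL₂ hm
  have hmem := mlt_lmul hmono (trivPair_mem htriv) c₁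
  rw [h₁] at hmem
  have key : MonoidAlgebra.single c₁ (1:k) * t₁ - MonoidAlgebra.single (c₁ * m) (1:k) * t₂
      = MonoidAlgebra.single c₁ (1:k) * (t₁ - MonoidAlgebra.single m (1:k) * t₂) := by
    simp only [single_app]
    noncomm_ring
  rw [key]
  exact hmem

include hwo hmono in
lemma claimEF_disj {s t : FreeAssocAlg k X} {ws wt : FreeMonoid X}
    (hs : s ∈ S) (hLs : LeadWord lt s ws) (hones : s ws = 1)
    (ht : t ∈ T) (hLt : LeadWord lt t wt) (honet : t wt = 1)
    (a e : FreeMonoid X) :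
    MonoidAlgebra.single a (1:k) * s * MonoidAlgebra.single (e * wt) 1
      - MonoidAlgebra.single (a * (ws * e)) (1:k) * t
      ∈ MLT lt S T (a * (ws * (e * wt))) := by
  have key : MonoidAlgebra.single a (1:k) * s * MonoidAlgebra.single (e * wt) 1
      - MonoidAlgebra.single (a * (ws * e)) (1:k) * t
      = (MonoidAlgebra.single a (1:k) * (s - MonoidAlgebra.single ws 1)
            * MonoidAlgebra.single e 1) * t
        - MonoidAlgebra.single a (1:k) * s
            * (MonoidAlgebra.single e (1:k) * (t - MonoidAlgebra.single wt 1)) := by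
    simp only [single_app]
    noncomm_ring
  rw [key]
  apply sub_mem
  · apply mul_t_mem ht hLt
    intro u hu
    obtain ⟨x, hx, rfl⟩ := conj_support hu
    have hxlt := sub_lead_supp hLs hones hx
    have h := hmono x ws a (e * wt) hxlt
    simp only [mul_assoc] at h ⊢
    exact h
  · apply mltS_le_mlt _
    apply mul_s_mul_mem hs hLs
    intro u hu v hv
    rw [single_supp hu]
    obtain ⟨y, hy, rfl⟩ := conj1_support hv
    have hylt := sub_lead_supp hLt honet hy
    have h := hmono_left hmono (a * (ws * e)) y wt hylt
    simp only [mul_assoc] at h ⊢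
    exact h

include hwo hmono in
lemma claimEF
    (hST : ∀ f ∈ S, ∀ g ∈ T, ∀ wf wg a b c : FreeMonoid X,
      LeadWord lt f wf → LeadWord lt g wg → a * wf * b = c * wg → c.length < wf.length →
      TrivialModPair lt S T
        (MonoidAlgebra.single a (1:k) * f * MonoidAlgebra.single b 1
          - MonoidAlgebra.single c (1:k) * g) (a * wf * b))
    {s t : FreeAssocAlg k X} {ws wt a b c w : FreeMonoid X}
    (hs : s ∈ S) (hLs : LeadWord lt s ws) (hones : s ws = 1) (hws1 : ws ≠ 1)
    (ht : t ∈ T) (hLt : LeadWord lt t wt) (honet : t wt = 1)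
    (h₁ : a * ws * b = w) (h₂ : c * wt = w) :
    MonoidAlgebra.single a (1:k) * s * MonoidAlgebra.single b 1
      - MonoidAlgebra.single c (1:k) * t ∈ MLT lt S T w := by
  have hcanc : a * (ws * b) = c * wt := by
    rw [h₂, ← h₁, mul_assoc]
  rcases fm_split hcanc with ⟨m, hm1, hm2⟩ | ⟨m, hm1, hm2⟩
  · -- c = a * m, ws * b = m * wt
    subst hm1
    rcases fm_split hm2 with ⟨e, he1, he2⟩ | ⟨e, he1, he2⟩
    · -- m = ws * e, b = e * wt : disjoint
      subst he1 he2
      have hw : a * (ws * (e * wt)) = w := by rw [← h₁]; simp only [mul_assoc]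
      rw [← hw]
      exact claimEF_disj hwo hmono hs hLs hones ht hLt honet a e
    · -- ws = m * e, wt = e * b
      by_cases he : e = 1
      · subst he
        rw [mul_one] at he1
        rw [one_mul] at he2
        subst he2
        subst he1
        have hd := claimEF_disj hwo hmono hs hLs hones ht hLt honet a 1
        simp only [one_mul, mul_one] at hd
        have hw : a * (ws * wt) = w := by rw [← h₁]; simp only [mul_assoc]
        rw [hw] at hd
        exact hd
      · have hlen : m.length < ws.length := fm_len_lt he1 he
        have harg : (1:FreeMonoid X) * ws * b = m * wt := by
          rw [one_mul, he2, he1, mul_assoc]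
        have htriv := hST s hs t ht ws wt 1 b m hLs hLt harg hlen
        have hmem := mlt_lmul hmono (trivPair_mem htriv) a
        have hw : a * ((1:FreeMonoid X) * ws * b) = w := by rw [one_mul, ← mul_assoc, h₁]
        rw [hw] at hmem
        rw [← MonoidAlgebra.one_def, one_mul] at hmem
        have key : MonoidAlgebra.single a (1:k) * s * MonoidAlgebra.single b 1
            - MonoidAlgebra.single (a * m) (1:k) * t
            = MonoidAlgebra.single a (1:k)
                * (s * MonoidAlgebra.single b 1 - MonoidAlgebra.single m (1:k) * t) := by
          simp only [single_app]
          noncomm_ring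
        rw [key]
        exact hmem
  · -- a = c * m, wt = m * (ws * b)
    subst hm1
    have harg : m * ws * b = (1:FreeMonoid X) * wt := by rw [one_mul, hm2, mul_assoc]
    have hlen : (1:FreeMonoid X).length < ws.length := by
      have h0 : (1:FreeMonoid X).length = 0 := rfl
      rw [h0]
      exact Nat.pos_of_ne_zero (fun hz => hws1 (FreeMonoid.length_eq_zero.1 hz))
    have htriv := hST s hs t ht ws wt m b 1 hLs hLt harg hlen
    have hmem := mlt_lmul hmono (trivPair_mem htriv) c
    have hw : c * (m * ws * b) = w := by
      rw [← h₂, hm2]; simp only [mul_assoc]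
    rw [hw] at hmem
    rw [← MonoidAlgebra.one_def, one_mul] at hmem
    have key : MonoidAlgebra.single (c * m) (1:k) * s * MonoidAlgebra.single b 1
        - MonoidAlgebra.single c (1:k) * t
        = MonoidAlgebra.single c (1:k)
            * (MonoidAlgebra.single m (1:k) * s * MonoidAlgebra.single b 1 - t) := by
      simp only [single_app]
      noncomm_ring
    rw [key]
    exact hmem

end Claims
section Main

variable {lt : FreeMonoid X → FreeMonoid X → Prop} {S T : Set (FreeAssocAlg k X)}
variable (hwo : IsWellOrder (FreeMonoid X) lt)
variable (hmono : ∀ u v a b : FreeMonoid X, lt u v → lt (a * u * b) (a * v * b))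

lemma mem_SuppP {P : FreeMonoid X → Prop} {x : FreeAssocAlg k X} :
    x ∈ SuppP (k := k) P ↔ ∀ u, x u ≠ 0 → P u := Iff.rfl

/-- The conclusion of the composition-diamond lemma. -/
def Concl (lt : FreeMonoid X → FreeMonoid X → Prop) (S T : Set (FreeAssocAlg k X))
    (wp : FreeMonoid X) : Prop :=
  (∃ (a b ws : FreeMonoid X) (s : FreeAssocAlg k X),
      s ∈ S ∧ LeadWord lt s ws ∧ wp = a * ws * b) ∨
  (∃ (c wt : FreeMonoid X) (t : FreeAssocAlg k X),
      t ∈ T ∧ LeadWord lt t wt ∧ wp = c * wt)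

include hwo hmono in
lemma claimA (hSm : ∀ s ∈ S, IsMonicPoly lt s) (hTm : ∀ t ∈ T, IsMonicPoly lt t)
    (hpair : IsGSPair lt S T)
    (hS1 : ∀ s ∈ S, ∀ ws, LeadWord lt s ws → ws ≠ 1)
    {g₁ g₂ : FreeAssocAlg k X} {w : FreeMonoid X}
    (h₁ : GVal lt S T g₁ w) (h₂ : GVal lt S T g₂ w) :
    g₁ - g₂ ∈ MLT lt S T w := by
  rcases h₁ with ⟨a₁, b₁, s₁, ws₁, hs₁, hL₁, hv₁, rfl⟩ | ⟨c₁, t₁, wt₁, ht₁, hLt₁, hv₁, rfl⟩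
  · rcases h₂ with ⟨a₂, b₂, s₂, ws₂, hs₂, hL₂, hv₂, rfl⟩ | ⟨c₂, t₂, wt₂, ht₂, hLt₂, hv₂, rfl⟩
    · -- E E
      have hsplit : a₁ * (ws₁ * b₁) = a₂ * (ws₂ * b₂) := by
        rw [← mul_assoc, ← mul_assoc, hv₁, hv₂]
      rcases fm_split hsplit with ⟨c, hc, _⟩ | ⟨c, hc, _⟩
      · subst hc
        exact mltS_le_mlt _ (claimEE hwo hmono hpair.1 hs₁ hL₁ (monic_coeff hwo hSm hs₁ hL₁)
          hs₂ hL₂ (monic_coeff hwo hSm hs₂ hL₂) hv₁ hv₂)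
      · subst hc
        have := mltS_le_mlt (T := T) _ (claimEE hwo hmono hpair.1 hs₂ hL₂
          (monic_coeff hwo hSm hs₂ hL₂) hs₁ hL₁ (monic_coeff hwo hSm hs₁ hL₁) hv₂ hv₁)
        have hneg := neg_mem this
        rwa [neg_sub] at hneg
    · -- E F
      exact claimEF hwo hmono hpair.2.2 hs₁ hL₁ (monic_coeff hwo hSm hs₁ hL₁)
        (hS1 s₁ hs₁ ws₁ hL₁) ht₂ hLt₂ (monic_coeff hwo hTm ht₂ hLt₂) hv₁ hv₂
  · rcases h₂ with ⟨a₂, b₂, s₂, ws₂, hs₂, hL₂, hv₂, rfl⟩ | ⟨c₂, t₂, wt₂, ht₂, hLt₂, hv₂, rfl⟩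
    · -- F E
      have := claimEF hwo hmono hpair.2.2 hs₂ hL₂ (monic_coeff hwo hSm hs₂ hL₂)
        (hS1 s₂ hs₂ ws₂ hL₂) ht₁ hLt₁ (monic_coeff hwo hTm ht₁ hLt₁) hv₂ hv₁
      have hneg := neg_mem this
      rwa [neg_sub] at hneg
    · -- F F
      have hsplit : c₁ * wt₁ = c₂ * wt₂ := by rw [hv₁, hv₂]
      rcases fm_split hsplit with ⟨m, hm1, hm2⟩ | ⟨m, hm1, hm2⟩
      · subst hm1
        exact claimFF hwo hmono hpair.2.1 ht₁ hLt₁ ht₂ hLt₂ hv₁ hm2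
      · subst hm1
        have := claimFF hwo hmono hpair.2.1 ht₂ hLt₂ ht₁ hLt₁ hv₂ hm2
        have hneg := neg_mem this
        rwa [neg_sub] at hneg

lemma normalize {w : FreeMonoid X} {p : FreeAssocAlg k X} (hp : p ∈ MLE lt S T w) :
    ∃ (n : ℕ) (γ : Fin n → k) (g : Fin n → FreeAssocAlg k X),
      (∀ i, GVal lt S T (g i) w) ∧
      ∃ r ∈ MLT lt S T w, p = (∑ i, γ i • g i) + r := by
  induction hp using Submodule.span_induction with
  | mem x hx =>
      obtain ⟨v, hv, hvw⟩ := hx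
      rcases hvw with rfl | hlt
      · exact ⟨1, fun _ => 1, fun _ => x, fun _ => hv, 0, Submodule.zero_mem _, by simp⟩
      · exact ⟨0, ![], ![], fun i => i.elim0, x,
          Submodule.subset_span ⟨v, hv, hlt⟩, by simp⟩
  | zero => exact ⟨0, ![], ![], fun i => i.elim0, 0, Submodule.zero_mem _, by simp⟩
  | add x y hx hy ihx ihy =>
      obtain ⟨n, γ, g, hg, r, hr, rfl⟩ := ihx
      obtain ⟨n', γ', g', hg', r', hr', rfl⟩ := ihy
      refine ⟨n + n', Fin.append γ γ', Fin.append g g', ?_, r + r',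
        Submodule.add_mem _ hr hr', ?_⟩
      · intro i
        refine Fin.addCases (fun j => ?_) (fun j => ?_) i
        · rw [Fin.append_left]; exact hg j
        · rw [Fin.append_right]; exact hg' j
      · rw [Fin.sum_univ_add]
        simp only [Fin.append_left, Fin.append_right]
        abel
  | smul c x hx ihx =>
      obtain ⟨n, γ, g, hg, r, hr, rfl⟩ := ihx
      refine ⟨n, fun i => c * γ i, g, hg, c • r, Submodule.smul_mem _ _ hr, ?_⟩
      rw [smul_add, Finset.smul_sum]
      simp only [smul_smul]

include hwo in
lemma extract {Q : FreeMonoid X → Prop} {p : FreeAssocAlg k X}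
    (hp : p ∈ Submodule.span k {x : FreeAssocAlg k X | ∃ v, GVal lt S T x v ∧ Q v})
    (hp0 : p ≠ 0) :
    ∃ m, Q m ∧ p ∈ MLE lt S T m := by
  classical
  obtain ⟨n, γ, g, hsum⟩ := Submodule.mem_span_set'.1 hp
  have hv : ∀ i : Fin n, ∃ v, GVal lt S T (g i : FreeAssocAlg k X) v ∧ Q v := fun i => (g i).2
  choose v hv1 hv2 using hv
  rcases Nat.eq_zero_or_pos n with rfl | hn
  · refine absurd ?_ hp0
    rw [← hsum]
    simp
  · have hne : (Finset.image v Finset.univ).Nonempty := by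
      refine ⟨v ⟨0, hn⟩, Finset.mem_image_of_mem v (Finset.mem_univ _)⟩
    obtain ⟨mmax, hmm, hmax⟩ := finset_max hwo hne
    refine ⟨mmax, ?_, ?_⟩
    · obtain ⟨j, _, rfl⟩ := Finset.mem_image.1 hmm
      exact hv2 j
    · rw [← hsum]
      apply Submodule.sum_mem
      intro i _
      apply Submodule.smul_mem
      apply Submodule.subset_span
      exact ⟨v i, hv1 i, hmax (v i) (Finset.mem_image_of_mem v (Finset.mem_univ i))⟩

include hwo hmono in
lemma inner (hSm : ∀ s ∈ S, IsMonicPoly lt s) (hTm : ∀ t ∈ T, IsMonicPoly lt t)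
    (hpair : IsGSPair lt S T)
    (hS1 : ∀ s ∈ S, ∀ ws, LeadWord lt s ws → ws ≠ 1)
    {w : FreeMonoid X}
    (IH : ∀ w', lt w' w → ∀ p : FreeAssocAlg k X, p ≠ 0 → p ∈ MLE lt S T w' →
      ∀ wp, LeadWord lt p wp → Concl lt S T wp) :
    ∀ (n : ℕ) (γ : Fin n → k) (g : Fin n → FreeAssocAlg k X),
      (∀ i, GVal lt S T (g i) w) → ∀ r ∈ MLT lt S T w,
      ∀ p : FreeAssocAlg k X, p = (∑ i, γ i • g i) + r → p ≠ 0 →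
      ∀ wp, LeadWord lt p wp → Concl lt S T wp := by
  intro n
  induction n with
  | zero =>
      intro γ g hg r hr p hpeq hp0 wp hwp
      have hpr : p ∈ MLT lt S T w := by
        rw [hpeq]
        simpa using hr
      obtain ⟨m, hmw, hm⟩ := extract hwo (Q := fun v => lt v w) hpr hp0
      exact IH m hmw p hp0 hm wp hwp
  | succ m ih =>
      intro γ g hg r hr p hpeq hp0 wp hwp
      by_cases hpw : p w = 0
      · -- all leading terms cancel
        have hg1 : ∀ i, (g i) w = 1 := fun i => gval_apply_one hwo hSm hTm (hg i)
        have hrw : r w = 0 := by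
          by_contra h0
          exact lt_irrefl' hwo w (mlt_le_supp hwo hmono w hr w h0)
        have hsumγ : ∑ i, γ i = 0 := by
          have hcalc : p w = ∑ i, γ i := by
            rw [hpeq, MonoidAlgebra.coeff_add, Finsupp.add_apply, hrw, add_zero, MonoidAlgebra.coeff_sum, Finsupp.finset_sum_apply]
            refine Finset.sum_congr rfl (fun i _ => ?_)
            rw [MonoidAlgebra.coeff_smul, Finsupp.smul_apply, hg1 i, smul_eq_mul, mul_one]
          rw [← hcalc, hpw]
        by_cases hγ0 : γ 0 = 0
        · refine ih (fun i => γ i.succ) (fun i => g i.succ) (fun i => hg i.succ) r hr p ?_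
            hp0 wp hwp
          rw [hpeq, Fin.sum_univ_succ, hγ0, zero_smul, zero_add]
        · rcases Nat.eq_zero_or_pos m with rfl | hm0
          · exact absurd (by simpa using hsumγ) hγ0
          · obtain ⟨m', rfl⟩ := Nat.exists_eq_succ_of_ne_zero (Nat.pos_iff_ne_zero.1 hm0)
            set γ' : Fin (m' + 1) → k :=
              Fin.cons (γ 0 + γ 1) (fun j : Fin m' => γ j.succ.succ) with hγ'def
            have hr' : r + γ 0 • (g 0 - g 1) ∈ MLT lt S T w :=
              Submodule.add_mem _ hr (Submodule.smul_mem _ _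
                (claimA hwo hmono hSm hTm hpair hS1 (hg 0) (hg 1)))
            refine ih γ' (fun j => g j.succ) (fun j => hg j.succ) _ hr' p ?_ hp0 wp hwp
            have e1 : (∑ i : Fin (m' + 2), γ i • g i)
                = γ 0 • g 0 + (γ 1 • g 1 + ∑ j : Fin m', γ j.succ.succ • g j.succ.succ) := by
              rw [Fin.sum_univ_succ, Fin.sum_univ_succ, Fin.succ_zero_eq_one]
            have e2 : (∑ j : Fin (m' + 1), γ' j • g j.succ)
                = (γ 0 + γ 1) • g 1 + ∑ j : Fin m', γ j.succ.succ • g j.succ.succ := by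
              rw [Fin.sum_univ_succ, Fin.succ_zero_eq_one]
              simp only [hγ'def, Fin.cons_zero, Fin.cons_succ]
            rw [hpeq, e1, e2]
            module
      · -- the leading word of p is w
        have hpsupp : ∀ u, p u ≠ 0 → u = w ∨ lt u w := by
          have : p ∈ SuppP (k := k) (fun u => u = w ∨ lt u w) := by
            rw [hpeq]
            apply Submodule.add_mem
            · apply Submodule.sum_mem
              intro i _
              apply Submodule.smul_mem
              exact fun u hu => gval_supp hwo hmono (hg i) u hu
            · exact fun u hu => Or.inr (mlt_le_supp hwo hmono w hr u hu)
          exact this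
        have hwpw : wp = w := by
          rcases hpsupp wp hwp.1 with h | h
          · exact h
          · by_contra hne
            have := hwp.2 w hpw (fun he => hne he.symm)
            exact lt_irrefl' hwo w (lt_trans' hwo this h)
        subst hwpw
        rcases hg 0 with ⟨a, b, s, ws, hs, hL, hv, _⟩ | ⟨c, t, wt, ht, hL, hv, _⟩
        · exact Or.inl ⟨a, b, ws, s, hs, hL, hv.symm⟩
        · exact Or.inr ⟨c, wt, t, ht, hL, hv.symm⟩

include hwo hmono in
lemma mainAux (hSm : ∀ s ∈ S, IsMonicPoly lt s) (hTm : ∀ t ∈ T, IsMonicPoly lt t)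
    (hpair : IsGSPair lt S T)
    (hS1 : ∀ s ∈ S, ∀ ws, LeadWord lt s ws → ws ≠ 1) :
    ∀ (w : FreeMonoid X) (p : FreeAssocAlg k X), p ≠ 0 → p ∈ MLE lt S T w →
      ∀ wp, LeadWord lt p wp → Concl lt S T wp := by
  haveI := hwo
  intro w
  induction w using WellFounded.induction (IsWellFounded.wf (r := lt)) with
  | _ w IH =>
      intro p hp0 hmem wp hwp
      obtain ⟨n, γ, g, hg, r, hr, hpeq⟩ := normalize hmem
      exact inner hwo hmono hSm hTm hpair hS1 IH n γ g hg r hr p hpeq hp0 wp hwp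

/-- Unbounded expansion: `f * s * g` lies in the span of all `GValS` generators. -/
lemma mul_s_mul_mem_all {s : FreeAssocAlg k X} {ws : FreeMonoid X} (hs : s ∈ S)
    (hws : LeadWord lt s ws) (f g : FreeAssocAlg k X) :
    f * s * g ∈ Submodule.span k {x : FreeAssocAlg k X | ∃ v, GValS lt S x v} := by
  classical
  have hf : f = ∑ u ∈ f.coeff.support, MonoidAlgebra.single u (f u) := by
    conv_lhs => rw [← MonoidAlgebra.sum_coeff_single f]
    rfl
  have hg : g = ∑ v ∈ g.coeff.support, MonoidAlgebra.single v (g v) := by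
    conv_lhs => rw [← MonoidAlgebra.sum_coeff_single g]
    rfl
  rw [hf, hg, Finset.sum_mul, Finset.sum_mul]
  apply Submodule.sum_mem
  intro u _
  rw [Finset.mul_sum]
  apply Submodule.sum_mem
  intro v _
  have heq : MonoidAlgebra.single u (f u) * s * MonoidAlgebra.single v (g v)
      = (f u * g v) • (MonoidAlgebra.single u (1:k) * s * MonoidAlgebra.single v 1) := by
    rw [show MonoidAlgebra.single u (f u) = (f u) • MonoidAlgebra.single u (1:k) by
        rw [MonoidAlgebra.smul_single', mul_one],
      show MonoidAlgebra.single v (g v) = (g v) • MonoidAlgebra.single v (1:k) by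
        rw [MonoidAlgebra.smul_single', mul_one]]
    rw [smul_mul_assoc, smul_mul_assoc, mul_smul_comm, smul_smul]
  rw [heq]
  exact Submodule.smul_mem _ _ (Submodule.subset_span
    ⟨u * ws * v, u, v, s, ws, hs, hws, rfl, rfl⟩)

/-- Unbounded expansion: `f * t` lies in the span of all `GValT` generators. -/
lemma mul_t_mem_all {t : FreeAssocAlg k X} {wt : FreeMonoid X} (ht : t ∈ T)
    (hwt : LeadWord lt t wt) (f : FreeAssocAlg k X) :
    f * t ∈ Submodule.span k {x : FreeAssocAlg k X | ∃ v, GValT lt T x v} := by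
  classical
  have hf : f = ∑ u ∈ f.coeff.support, MonoidAlgebra.single u (f u) := by
    conv_lhs => rw [← MonoidAlgebra.sum_coeff_single f]
    rfl
  rw [hf, Finset.sum_mul]
  apply Submodule.sum_mem
  intro u _
  have heq : MonoidAlgebra.single u (f u) * t = (f u) • (MonoidAlgebra.single u (1:k) * t) := by
    rw [show MonoidAlgebra.single u (f u) = (f u) • MonoidAlgebra.single u (1:k) by
        rw [MonoidAlgebra.smul_single', mul_one], smul_mul_assoc]
  rw [heq]
  exact Submodule.smul_mem _ _ (Submodule.subset_span ⟨u * wt, u, t, wt, ht, hwt, rfl, rfl⟩)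

lemma convT (hTm : ∀ t ∈ T, IsMonicPoly lt t) {q : FreeAssocAlg k X}
    (hq : q ∈ Submodule.span (FreeAssocAlg k X) T) :
    q ∈ Submodule.span k {x : FreeAssocAlg k X | ∃ v, GValT lt T x v} := by
  have hmul : ∀ (f y : FreeAssocAlg k X),
      y ∈ Submodule.span k {x : FreeAssocAlg k X | ∃ v, GValT lt T x v} →
      f * y ∈ Submodule.span k {x : FreeAssocAlg k X | ∃ v, GValT lt T x v} := by
    intro f y hy
    induction hy using Submodule.span_induction with
    | mem x hx =>
        obtain ⟨v, c, t, wt, ht, hLt, hv, rfl⟩ := hx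
        have : f * (MonoidAlgebra.single c (1:k) * t)
            = (f * MonoidAlgebra.single c (1:k)) * t := by rw [mul_assoc]
        rw [this]
        exact mul_t_mem_all ht hLt _
    | zero => rw [mul_zero]; exact Submodule.zero_mem _
    | add x y _ _ hx hy => rw [mul_add]; exact Submodule.add_mem _ hx hy
    | smul c x _ hx => rw [mul_smul_comm]; exact Submodule.smul_mem _ _ hx
  induction hq using Submodule.span_induction with
  | mem t ht =>
      obtain ⟨wt, hLt, _⟩ := hTm t ht
      apply Submodule.subset_span
      refine ⟨1 * wt, 1, t, wt, ht, hLt, rfl, ?_⟩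
      rw [← MonoidAlgebra.one_def, one_mul]
  | zero => exact Submodule.zero_mem _
  | add x y _ _ hx hy => exact Submodule.add_mem _ hx hy
  | smul c x _ hx =>
      rw [smul_eq_mul]
      exact hmul c x hx

lemma convS (hSm : ∀ s ∈ S, IsMonicPoly lt s) {r : FreeAssocAlg k X}
    (hr : r ∈ TwoSidedIdeal.span S) :
    r ∈ Submodule.span k {x : FreeAssocAlg k X | ∃ v, GValS lt S x v} := by
  have hml : ∀ {f y : FreeAssocAlg k X},
      y ∈ Submodule.span k {x : FreeAssocAlg k X | ∃ v, GValS lt S x v} →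
      f * y ∈ Submodule.span k {x : FreeAssocAlg k X | ∃ v, GValS lt S x v} := by
    intro f y hy
    induction hy using Submodule.span_induction with
    | mem x hx =>
        obtain ⟨v, a, b, s, ws, hs, hws, hv, rfl⟩ := hx
        have : f * (MonoidAlgebra.single a (1:k) * s * MonoidAlgebra.single b 1)
            = (f * MonoidAlgebra.single a (1:k)) * s * MonoidAlgebra.single b 1 := by
          rw [mul_assoc, mul_assoc, mul_assoc]
        rw [this]
        exact mul_s_mul_mem_all hs hws _ _
    | zero => rw [mul_zero]; exact Submodule.zero_mem _
    | add x y _ _ hx hy => rw [mul_add]; exact Submodule.add_mem _ hx hy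
    | smul c x _ hx => rw [mul_smul_comm]; exact Submodule.smul_mem _ _ hx
  have hmr : ∀ {f y : FreeAssocAlg k X},
      y ∈ Submodule.span k {x : FreeAssocAlg k X | ∃ v, GValS lt S x v} →
      y * f ∈ Submodule.span k {x : FreeAssocAlg k X | ∃ v, GValS lt S x v} := by
    intro f y hy
    induction hy using Submodule.span_induction with
    | mem x hx =>
        obtain ⟨v, a, b, s, ws, hs, hws, hv, rfl⟩ := hx
        have : (MonoidAlgebra.single a (1:k) * s * MonoidAlgebra.single b 1) * f
            = MonoidAlgebra.single a (1:k) * s * (MonoidAlgebra.single b (1:k) * f) := by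
          rw [mul_assoc, mul_assoc]
        rw [this]
        exact mul_s_mul_mem_all hs hws _ _
    | zero => rw [zero_mul]; exact Submodule.zero_mem _
    | add x y _ _ hx hy => rw [add_mul]; exact Submodule.add_mem _ hx hy
    | smul c x _ hx => rw [smul_mul_assoc]; exact Submodule.smul_mem _ _ hx
  set N : Submodule k (FreeAssocAlg k X) :=
    Submodule.span k {x : FreeAssocAlg k X | ∃ v, GValS lt S x v} with hN
  let I : TwoSidedIdeal (FreeAssocAlg k X) := TwoSidedIdeal.mk'
    (N : Set (FreeAssocAlg k X))
    N.zero_mem (fun hx hy => N.add_mem hx hy)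
    (fun hx => N.neg_mem hx) (fun hy => hml hy) (fun hx => hmr hx)
  have hSsub : S ⊆ (I : Set (FreeAssocAlg k X)) := by
    intro s hs
    obtain ⟨ws, hws, _⟩ := hSm s hs
    have : s ∈ Submodule.span k {x : FreeAssocAlg k X | ∃ v, GValS lt S x v} := by
      apply Submodule.subset_span
      refine ⟨1 * ws * 1, 1, 1, s, ws, hs, hws, rfl, ?_⟩
      rw [← MonoidAlgebra.one_def, one_mul, mul_one]
    simpa [I, TwoSidedIdeal.mem_mk'] using this
  have := TwoSidedIdeal.mem_span_iff.1 hr I hSsub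
  simpa [I, TwoSidedIdeal.mem_mk'] using this

end Main

end CD

theorem kang_lee_composition_diamond
    (lt : FreeMonoid X → FreeMonoid X → Prop)
    (hwo : IsWellOrder (FreeMonoid X) lt)
    (hmono : ∀ u v a b : FreeMonoid X, lt u v → lt (a * u * b) (a * v * b))
    (S T : Set (FreeAssocAlg k X))
    (hSmonic : ∀ s ∈ S, IsMonicPoly lt s) (hTmonic : ∀ t ∈ T, IsMonicPoly lt t)
    (hpair : IsGSPair lt S T)
    (p : FreeAssocAlg k X) (hp : p ≠ 0)
    -- `p ∈ k⟨X⟩T + Id(S)`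
    (hmem : ∃ q r : FreeAssocAlg k X, q ∈ Submodule.span (FreeAssocAlg k X) T ∧
      r ∈ TwoSidedIdeal.span S ∧ p = q + r)
    (wp : FreeMonoid X) (hwp : LeadWord lt p wp) :
    (∃ (a b ws : FreeMonoid X) (s : FreeAssocAlg k X),
        s ∈ S ∧ LeadWord lt s ws ∧ wp = a * ws * b) ∨
    (∃ (c wt : FreeMonoid X) (t : FreeAssocAlg k X),
        t ∈ T ∧ LeadWord lt t wt ∧ wp = c * wt) := by
  classical
  by_cases hε : ∃ s ∈ S, ∃ ws, LeadWord lt s ws ∧ ws = 1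
  · obtain ⟨s, hs, ws, hL, hws1⟩ := hε
    subst hws1
    left
    exact ⟨wp, 1, 1, s, hs, hL, by rw [mul_one, mul_one]⟩
  · push_neg at hε
    have hS1 : ∀ s ∈ S, ∀ ws, LeadWord lt s ws → ws ≠ 1 := hε
    obtain ⟨q, r, hq, hr, rfl⟩ := hmem
    have hq' := CD.convT (lt := lt) hTmonic hq
    have hr' := CD.convS (lt := lt) hSmonic hr
    have hmemAll : q + r ∈ Submodule.span k
        {x : FreeAssocAlg k X | ∃ v, CD.GVal lt S T x v ∧ True} := by
      apply Submodule.add_mem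
      · refine Submodule.span_mono ?_ hq'
        rintro x ⟨v, hv⟩
        exact ⟨v, Or.inr hv, trivial⟩
      · refine Submodule.span_mono ?_ hr'
        rintro x ⟨v, hv⟩
        exact ⟨v, Or.inl hv, trivial⟩
    obtain ⟨m, -, hm⟩ := CD.extract hwo hmemAll hp
    exact CD.mainAux hwo hmono hSmonic hTmonic hpair hS1 m (q + r) hp hm wp hwp
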